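/- Let M ⊆ Z_{p^r}[x]^2 be the p-span of (v_1, ..., v_{2r}) where {v_1,...,v_{2r}} has the p-PLM property, and suppose j* is an index with lpos(v_{j*}) = 2 and ord(v_{j*}) = r. Then v_{j*} has minimal leading monomial among all vectors in M of order r and leading position 2, and every such minimal vector f has the form f = a v_{j*} + Σ_{i ≠ j*} a_i v_i with a a nonzero digit in A_p and a_i ∈ A_p[x] satisfying lm(a_i v_i) ≤ lm(v_{j*}). -/

import Mathlib

open Polynomial

open scoped Classical

/-- Support of a polynomial vector: monomials `(degree, position)` ordered lexicographically,
which is the term-over-position (top) ordering. -/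
noncomputable def vsupp {R : Type*} [CommRing R] {q : ℕ} (f : Fin q → R[X]) :
    Finset (Lex (ℕ × Fin q)) :=
  Finset.univ.biUnion fun i => (f i).support.image fun α => toLex (α, i)

/-- Leading monomial w.r.t. the top ordering (`⊥` for the zero vector). -/
noncomputable def vlm {R : Type*} [CommRing R] {q : ℕ} (f : Fin q → R[X]) :
    WithBot (Lex (ℕ × Fin q)) := (vsupp f).max

/-- Degree of the leading monomial (junk value `0` for the zero vector). -/
noncomputable def vdeg {R : Type*} [CommRing R] {q : ℕ} (f : Fin q → R[X]) : ℕ :=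
  WithBot.unbotD 0 ((vlm f).map fun m => (ofLex m).1)

/-- Leading position. -/
noncomputable def vlpos {R : Type*} [CommRing R] {q : ℕ} (f : Fin q → R[X]) : WithBot (Fin q) :=
  (vlm f).map fun m => (ofLex m).2

/-- Leading coefficient. -/
noncomputable def vlc {R : Type*} [CommRing R] {q : ℕ} (f : Fin q → R[X]) : R :=
  WithBot.unbotD 0 ((vlm f).map fun m => (f (ofLex m).2).coeff (ofLex m).1)

/-- `c` is a digit: one of `0,1,…,p-1` (as a ring element). -/
def IsDigit {R : Type*} [CommRing R] (p : ℕ) (c : R) : Prop := ∃ t : ℕ, t < p ∧ c = (t : R)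

/-- All coefficients of `a` are digits, i.e. `a ∈ A_p[x]`. -/
def IsDigitPoly {R : Type*} [CommRing R] (p : ℕ) (a : R[X]) : Prop := ∀ n, IsDigit p (a.coeff n)

/-- The p-span: the set of all p-linear combinations of the `v i`. -/
def pSpan {R : Type*} [CommRing R] {q : ℕ} (p : ℕ) {ι : Type*} [Fintype ι]
    (v : ι → Fin q → R[X]) : Set (Fin q → R[X]) :=
  {f | ∃ a : ι → R[X], (∀ i, IsDigitPoly p (a i)) ∧ f = ∑ i, a i • v i}

/-- p-generator sequence: `p • v i` is a p-linear combination of the later elements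
(for the last element, `p • v i = 0`). -/
def IsPGenSeq {R : Type*} [CommRing R] {q : ℕ} (p : ℕ) {ι : Type*} [Fintype ι] [LinearOrder ι]
    (v : ι → Fin q → R[X]) : Prop :=
  ∀ i : ι, ∃ a : ι → R[X], (∀ j, IsDigitPoly p (a j)) ∧ (∀ j, j ≤ i → a j = 0) ∧
    (p : R) • v i = ∑ j, a j • v j

/-- p-linear independence: only the trivial p-linear combination vanishes. -/
def PLinIndep {R : Type*} [CommRing R] {q : ℕ} (p : ℕ) {ι : Type*} [Fintype ι]
    (v : ι → Fin q → R[X]) : Prop :=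
  ∀ a : ι → R[X], (∀ i, IsDigitPoly p (a i)) → ∑ i, a i • v i = 0 → ∀ i, a i = 0

/-- The p-Predictable Leading Monomial (p-PLM) property. -/
def HasPPLM {R : Type*} [CommRing R] {q : ℕ} (p : ℕ) {ι : Type*} [Fintype ι]
    (v : ι → Fin q → R[X]) : Prop :=
  ∀ a : ι → R[X], (∀ i, IsDigitPoly p (a i)) → ∑ i, a i • v i ≠ 0 →
    vlm (∑ i, a i • v i) = (Finset.univ.filter fun i => a i ≠ 0).sup fun i => vlm (a i • v i)

/-!
Write `f = ∑ aᵢ vᵢ` with digit polynomials `aᵢ`. By the p-PLM property every `aᵢ vᵢ` has leading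
monomial at most `lm f`, so `lc f` is the sum of the leading coefficients `lc(aᵢ) lc(vᵢ)` of the
summands attaining `lm f`. A nonzero digit is a unit of `Z_{p^r}` and `Z_{p^r}` is local, so when
`f` has order `r` one of these summands has `lc(vᵢ)` a unit: `vᵢ` then has order `r` and the
leading position of `f`, hence is `v_{j⋆}`. Thus `lm f = lm (a_{j⋆} v_{j⋆}) ≥ lm v_{j⋆}`, with
equality only when `a_{j⋆}` is a constant.
-/

section VectorLeadingMonomial

variable {R : Type*} [CommRing R] {q : ℕ}

theorem mem_vsupp_iff {f : Fin q → R[X]} {n : ℕ} {i : Fin q} :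
    toLex (n, i) ∈ vsupp f ↔ (f i).coeff n ≠ 0 := by
  simp [vsupp]

theorem vlm_eq_bot_iff {f : Fin q → R[X]} : vlm f = ⊥ ↔ f = 0 := by
  rw [vlm, Finset.max_eq_bot, Finset.eq_empty_iff_forall_notMem, funext_iff]
  refine ⟨fun h i => Polynomial.ext fun n => not_not.1 fun hn => h _ (mem_vsupp_iff.2 hn),
    fun h m hm => ?_⟩
  exact (mem_vsupp_iff (n := (ofLex m).1) (i := (ofLex m).2)).1 hm (by simp [h])

theorem coe_le_vlm {f : Fin q → R[X]} {n : ℕ} {i : Fin q} (h : (f i).coeff n ≠ 0) :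
    ↑(toLex (n, i)) ≤ vlm f :=
  Finset.le_max (mem_vsupp_iff.2 h)

theorem coeff_eq_zero_of_vlm_lt {f : Fin q → R[X]} {n : ℕ} {i : Fin q}
    (h : vlm f < ↑(toLex (n, i))) : (f i).coeff n = 0 :=
  not_not.1 fun hc => (coe_le_vlm hc).not_gt h

theorem vlm_le_iff {f : Fin q → R[X]} {m : Lex (ℕ × Fin q)} :
    vlm f ≤ m ↔ ∀ n i, (f i).coeff n ≠ 0 → toLex (n, i) ≤ m := by
  refine ⟨fun h n i hn => WithBot.coe_le_coe.1 ((coe_le_vlm hn).trans h), fun h => ?_⟩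
  exact Finset.max_le fun m' hm' => WithBot.coe_le_coe.2 <|
    h (ofLex m').1 (ofLex m').2 (mem_vsupp_iff.1 hm')

theorem exists_vlm_eq {f : Fin q → R[X]} (hf : f ≠ 0) :
    ∃ (d : ℕ) (pos : Fin q), vlm f = ↑(toLex (d, pos)) := by
  obtain ⟨m, hm⟩ := WithBot.ne_bot_iff_exists.1 (mt vlm_eq_bot_iff.1 hf)
  exact ⟨(ofLex m).1, (ofLex m).2, hm.symm⟩

section OfVlmEq

variable {f : Fin q → R[X]} {d : ℕ} {pos : Fin q}

theorem coeff_ne_zero_of_vlm_eq (h : vlm f = ↑(toLex (d, pos))) : (f pos).coeff d ≠ 0 :=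
  mem_vsupp_iff.1 (Finset.mem_of_max h)

theorem natDegree_eq_of_vlm_eq (h : vlm f = ↑(toLex (d, pos))) : (f pos).natDegree = d := by
  refine le_antisymm (natDegree_le_iff_coeff_eq_zero.2 fun n hn => ?_)
    (le_natDegree_of_ne_zero (coeff_ne_zero_of_vlm_eq h))
  refine coeff_eq_zero_of_vlm_lt (h ▸ WithBot.coe_lt_coe.2 ?_)
  exact Prod.Lex.toLex_lt_toLex.2 (Or.inl hn)

theorem vlpos_of_vlm_eq (h : vlm f = ↑(toLex (d, pos))) : vlpos f = pos := by
  rw [vlpos, h]; rfl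

theorem vlc_of_vlm_eq (h : vlm f = ↑(toLex (d, pos))) : vlc f = (f pos).coeff d := by
  rw [vlc, h]; rfl

end OfVlmEq

theorem toLex_le_toLex_add {k n e d : ℕ} {i pos : Fin q} (h : toLex (k, i) ≤ toLex (d, pos))
    (hn : n ≤ e + k) : toLex (n, i) ≤ toLex (e + d, pos) := by
  simp only [Prod.Lex.toLex_le_toLex] at h ⊢
  omega

variable {a : R[X]} {v : Fin q → R[X]}

theorem vlm_smul_of_vlm_eq (ha : IsUnit a.leadingCoeff) {d : ℕ} {pos : Fin q}
    (hv : vlm v = ↑(toLex (d, pos))) : vlm (a • v) = ↑(toLex (a.natDegree + d, pos)) := by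
  have htop : (a * v pos).coeff (a.natDegree + d) = a.leadingCoeff * (v pos).coeff d := by
    rw [← natDegree_eq_of_vlm_eq hv, coeff_mul_degree_add_degree]
    rfl
  refine le_antisymm (vlm_le_iff.2 fun n i hn => ?_) (coe_le_vlm ?_)
  · have hvi : v i ≠ 0 := by rintro h0; simp [h0] at hn
    exact toLex_le_toLex_add (vlm_le_iff.1 hv.le _ i (leadingCoeff_ne_zero.2 hvi))
      ((le_natDegree_of_ne_zero hn).trans natDegree_mul_le)
  · exact htop ▸ (ha.mul_right_eq_zero.not.2 (coeff_ne_zero_of_vlm_eq hv))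

theorem vlc_smul (ha : IsUnit a.leadingCoeff) : vlc (a • v) = a.leadingCoeff * vlc v := by
  rcases eq_or_ne v 0 with rfl | hv0
  · simp [vlc, vlm_eq_bot_iff.2]
  obtain ⟨d, pos, hv⟩ := exists_vlm_eq hv0
  rw [vlc_of_vlm_eq (vlm_smul_of_vlm_eq ha hv), vlc_of_vlm_eq hv, Pi.smul_apply, smul_eq_mul,
    ← natDegree_eq_of_vlm_eq hv, coeff_mul_degree_add_degree]
  rfl

theorem vlpos_smul (ha : IsUnit a.leadingCoeff) : vlpos (a • v) = vlpos v := by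
  rcases eq_or_ne v 0 with rfl | hv0
  · simp
  obtain ⟨d, pos, hv⟩ := exists_vlm_eq hv0
  rw [vlpos_of_vlm_eq (vlm_smul_of_vlm_eq ha hv), vlpos_of_vlm_eq hv]

theorem vlm_le_vlm_smul (ha : IsUnit a.leadingCoeff) : vlm v ≤ vlm (a • v) := by
  rcases eq_or_ne v 0 with rfl | hv0
  · simp [vlm_eq_bot_iff.2]
  obtain ⟨d, pos, hv⟩ := exists_vlm_eq hv0
  rw [hv, vlm_smul_of_vlm_eq ha hv, WithBot.coe_le_coe]
  exact toLex_le_toLex_add le_rfl (Nat.le_add_left d _)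

theorem natDegree_eq_zero_of_vlm_smul_eq (ha : IsUnit a.leadingCoeff) (hv0 : v ≠ 0)
    (h : vlm (a • v) = vlm v) : a.natDegree = 0 := by
  obtain ⟨d, pos, hv⟩ := exists_vlm_eq hv0
  rw [hv, vlm_smul_of_vlm_eq ha hv, WithBot.coe_inj, toLex_inj, Prod.mk.injEq] at h
  omega

end VectorLeadingMonomial

theorem exists_isUnit_vlc_of_isUnit_vlc_sum {R : Type*} [CommRing R] [IsLocalRing R] {q : ℕ}
    {ι : Type*} [Fintype ι] {a : ι → R[X]} {v : ι → Fin q → R[X]}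
    (ha : ∀ i, a i ≠ 0 → IsUnit (a i).leadingCoeff)
    (hle : ∀ i, vlm (a i • v i) ≤ vlm (∑ j, a j • v j))
    (hu : IsUnit (vlc (∑ j, a j • v j))) :
    ∃ i, a i ≠ 0 ∧ vlm (a i • v i) = vlm (∑ j, a j • v j) ∧ IsUnit (vlc (v i)) := by
  set f := ∑ j, a j • v j with hf
  have hf0 : f ≠ 0 := by rintro h; simp [h, vlc, vlm_eq_bot_iff.2] at hu
  obtain ⟨d, pos, hd⟩ := exists_vlm_eq hf0
  by_contra! hnu
  have hmem : ∀ i, ((a i • v i) pos).coeff d ∈ IsLocalRing.maximalIdeal R := by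
    intro i
    rcases (hle i).lt_or_eq with hlt | heq
    · rw [coeff_eq_zero_of_vlm_lt (hd ▸ hlt)]
      exact zero_mem _
    · have hai : a i ≠ 0 := by rintro h; simp [h, vlm_eq_bot_iff.2, hd] at heq
      rw [← vlc_of_vlm_eq (heq.trans hd), vlc_smul (ha i hai)]
      exact Ideal.mul_mem_left _ _ (hnu i hai heq)
  have hsum : vlc f = ∑ i, ((a i • v i) pos).coeff d := by
    rw [vlc_of_vlm_eq hd, hf, Finset.sum_apply, finsetSum_coeff]
  exact (IsLocalRing.mem_maximalIdeal _).1 (hsum ▸ Ideal.sum_mem _ fun i _ => hmem i) hu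

namespace ZMod

theorem card_zmultiples_eq_iff_isUnit {n : ℕ} [NeZero n] (c : ZMod n) :
    Nat.card (AddSubgroup.zmultiples c) = n ↔ IsUnit c := by
  rw [Nat.card_zmultiples, ← natCast_zmod_val c, addOrderOf_coe _ (NeZero.ne n),
    Nat.div_eq_self, isUnit_iff_coprime, Nat.coprime_comm, Nat.Coprime]
  simp [NeZero.ne n]

variable {p r : ℕ}

theorem not_isUnit_iff_dvd (hp : p.Prime) (hr : 0 < r) {c : ZMod (p ^ r)} :
    ¬IsUnit c ↔ (p : ZMod (p ^ r)) ∣ c := by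
  have : NeZero (p ^ r) := ⟨pow_ne_zero r hp.ne_zero⟩
  refine ⟨fun h => ?_, fun h hc => prime_natCast_not_isUnit_pow hp hr (isUnit_of_dvd_unit h hc)⟩
  rw [← natCast_zmod_val c, isUnit_natCast_iff_not_dvd_pow hp hr, not_not] at h
  exact natCast_zmod_val c ▸ Nat.cast_dvd_cast h

theorem isLocalRing_prime_pow (hp : p.Prime) (hr : 0 < r) : IsLocalRing (ZMod (p ^ r)) :=
  haveI : Fact (1 < p ^ r) := ⟨Nat.one_lt_pow hr.ne' hp.one_lt⟩
  IsLocalRing.of_nonunits_add fun _ _ ha hb =>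
    (not_isUnit_iff_dvd hp hr).2 (dvd_add ((not_isUnit_iff_dvd hp hr).1 ha)
      ((not_isUnit_iff_dvd hp hr).1 hb))

theorem isUnit_of_isDigit (hp : p.Prime) (hr : 0 < r) {c : ZMod (p ^ r)} (h : IsDigit p c)
    (h0 : c ≠ 0) : IsUnit c := by
  obtain ⟨t, htp, rfl⟩ := h
  have ht0 : t ≠ 0 := by rintro rfl; simp at h0
  exact (isUnit_natCast_iff_not_dvd_pow hp hr).2 (Nat.not_dvd_of_pos_of_lt (by omega) htp)

theorem isUnit_leadingCoeff_of_isDigitPoly (hp : p.Prime) (hr : 0 < r) {a : (ZMod (p ^ r))[X]}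
    (h : IsDigitPoly p a) (h0 : a ≠ 0) : IsUnit a.leadingCoeff :=
  isUnit_of_isDigit hp hr (h a.natDegree) (leadingCoeff_ne_zero.2 h0)

end ZMod

section PSpan

variable {R : Type*} [CommRing R] {p : ℕ}

theorem isDigitPoly_zero (hp : 0 < p) : IsDigitPoly p (0 : R[X]) :=
  fun _ => ⟨0, hp, by simp⟩

theorem isDigitPoly_one (hp : 1 < p) : IsDigitPoly p (1 : R[X]) := by
  intro n
  rcases eq_or_ne n 0 with rfl | hn
  · exact ⟨1, hp, by simp⟩
  · exact ⟨0, by omega, by simp [coeff_one, hn]⟩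

theorem mem_pSpan_self {q : ℕ} {ι : Type*} [Fintype ι] (hp : 1 < p) (v : ι → Fin q → R[X])
    (j : ι) : v j ∈ pSpan p v := by
  refine ⟨Pi.single j 1, fun i => ?_, by simp [Pi.single_apply, ite_smul]⟩
  rcases eq_or_ne i j with rfl | hij
  · simpa using isDigitPoly_one hp
  · simpa [hij] using isDigitPoly_zero (R := R) (by omega)

end PSpan

theorem exists_repr_vlm_eq_vlm_smul {p r q : ℕ} {ι : Type*} [Fintype ι] (hp : p.Prime)
    (hr : 0 < r) {v : ι → Fin q → (ZMod (p ^ r))[X]} (hPLM : HasPPLM p v)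
    (hdist : ∀ i j, i ≠ j → vlpos (v i) = vlpos (v j) →
      Nat.card (AddSubgroup.zmultiples (vlc (v i))) ≠
        Nat.card (AddSubgroup.zmultiples (vlc (v j))))
    {j : ι} (hjord : Nat.card (AddSubgroup.zmultiples (vlc (v j))) = p ^ r)
    {f : Fin q → (ZMod (p ^ r))[X]} (hf : f ∈ pSpan p v) (hpos : vlpos f = vlpos (v j))
    (hford : Nat.card (AddSubgroup.zmultiples (vlc f)) = p ^ r) :
    ∃ a : ι → (ZMod (p ^ r))[X], (∀ i, IsDigitPoly p (a i)) ∧ f = ∑ i, a i • v i ∧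
      a j ≠ 0 ∧ vlm (a j • v j) = vlm f ∧ ∀ i, vlm (a i • v i) ≤ vlm f := by
  have : NeZero (p ^ r) := ⟨pow_ne_zero r hp.ne_zero⟩
  have := ZMod.isLocalRing_prime_pow hp hr
  obtain ⟨a, ha, rfl⟩ := hf
  have hfu := (ZMod.card_zmultiples_eq_iff_isUnit _).1 hford
  have hle : ∀ i, vlm (a i • v i) ≤ vlm (∑ i, a i • v i) := by
    intro i
    rcases eq_or_ne (a i) 0 with hai | hai
    · simp [hai, vlm_eq_bot_iff.2]
    rw [hPLM a ha fun h => by simp [h, vlc, vlm_eq_bot_iff.2] at hfu]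
    exact Finset.le_sup (f := fun i => vlm (a i • v i)) (by simpa using hai)
  obtain ⟨i, hai, hi, hiu⟩ := exists_isUnit_vlc_of_isUnit_vlc_sum
    (fun i => ZMod.isUnit_leadingCoeff_of_isDigitPoly hp hr (ha i)) hle hfu
  obtain rfl : i = j := by
    by_contra hij
    refine hdist i j hij ?_ (by rw [(ZMod.card_zmultiples_eq_iff_isUnit _).2 hiu, hjord])
    rw [← hpos, ← vlpos_smul (ZMod.isUnit_leadingCoeff_of_isDigitPoly hp hr (ha i) hai), vlpos,
      vlpos, hi]
  exact ⟨a, ha, rfl, hai, hi, hle⟩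

/-- Let `M ⊆ Z_{p^r}[x]^2` be the p-span of `(v_1,…,v_{2r})` having the p-PLM property, with
pairwise distinct (leading position, order) pairs, and `j⋆` the index with `lpos v_{j⋆} = 2`
and `ord v_{j⋆} = r`. Then `v_{j⋆}` has minimal leading monomial among all vectors of `M` of
order `r` and leading position 2, and every such minimal vector `f` has the form
`f = a v_{j⋆} + ∑_{i ≠ j⋆} a_i v_i` with `a` a nonzero digit and `a_i ∈ A_p[x]` with
`lm (a_i v_i) ≤ lm (v_{j⋆})`. -/
theorem ring_minimal_lpos_two_param (p r : ℕ) (hp : p.Prime) (hr : 0 < r)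
    (v : Fin (2 * r) → Fin 2 → Polynomial (ZMod (p ^ r)))
    (hPLM : HasPPLM p v)
    (hdist : ∀ i j, i ≠ j → vlpos (v i) = vlpos (v j) →
      Nat.card (AddSubgroup.zmultiples (vlc (v i))) ≠
        Nat.card (AddSubgroup.zmultiples (vlc (v j))))
    (jstar : Fin (2 * r))
    (hjpos : vlpos (v jstar) = ((1 : Fin 2) : WithBot (Fin 2)))
    (hjord : Nat.card (AddSubgroup.zmultiples (vlc (v jstar))) = p ^ r) :
    (∀ f ∈ pSpan p v, f ≠ 0 → vlpos f = ((1 : Fin 2) : WithBot (Fin 2)) →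
        Nat.card (AddSubgroup.zmultiples (vlc f)) = p ^ r → vlm (v jstar) ≤ vlm f) ∧
    (∀ f ∈ pSpan p v, f ≠ 0 → vlpos f = ((1 : Fin 2) : WithBot (Fin 2)) →
      Nat.card (AddSubgroup.zmultiples (vlc f)) = p ^ r →
      (∀ f' ∈ pSpan p v, f' ≠ 0 → vlpos f' = ((1 : Fin 2) : WithBot (Fin 2)) →
        Nat.card (AddSubgroup.zmultiples (vlc f')) = p ^ r → vlm f ≤ vlm f') →
      ∃ (a : ZMod (p ^ r)) (b : Fin (2 * r) → Polynomial (ZMod (p ^ r))),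
        IsDigit p a ∧ a ≠ 0 ∧ (∀ i, IsDigitPoly p (b i)) ∧
        (∀ i, i ≠ jstar → vlm (b i • v i) ≤ vlm (v jstar)) ∧
        f = (C a) • v jstar + ∑ i ∈ Finset.univ.filter (· ≠ jstar), b i • v i) := by
  have hvj : v jstar ≠ 0 := by rintro h; simp [h, vlpos, vlm_eq_bot_iff.2] at hjpos
  have hunit {a : Polynomial (ZMod (p ^ r))} (ha : IsDigitPoly p a) (h0 : a ≠ 0) :=
    ZMod.isUnit_leadingCoeff_of_isDigitPoly hp hr ha h0
  have repr {f} (hf : f ∈ pSpan p v) (hfpos : vlpos f = ((1 : Fin 2) : WithBot (Fin 2)))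
      (hford : Nat.card (AddSubgroup.zmultiples (vlc f)) = p ^ r) :=
    exists_repr_vlm_eq_vlm_smul hp hr hPLM hdist hjord hf (hfpos.trans hjpos.symm) hford
  have lower : ∀ f ∈ pSpan p v, f ≠ 0 → vlpos f = ((1 : Fin 2) : WithBot (Fin 2)) →
      Nat.card (AddSubgroup.zmultiples (vlc f)) = p ^ r → vlm (v jstar) ≤ vlm f := by
    intro f hf _ hfpos hford
    obtain ⟨a, ha, -, haj, hlm, -⟩ := repr hf hfpos hford
    exact hlm ▸ vlm_le_vlm_smul (hunit (ha jstar) haj)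
  refine ⟨lower, fun f hf hf0 hfpos hford hmin => ?_⟩
  obtain ⟨a, ha, rfl, haj, hlm, hle⟩ := repr hf hfpos hford
  have hflm : vlm (∑ i, a i • v i) = vlm (v jstar) :=
    le_antisymm (hmin _ (mem_pSpan_self hp.one_lt v jstar) hvj hjpos hjord)
      (lower _ hf hf0 hfpos hford)
  have hC : a jstar = C ((a jstar).coeff 0) := eq_C_of_natDegree_eq_zero
    (natDegree_eq_zero_of_vlm_smul_eq (hunit (ha jstar) haj) hvj (hlm.trans hflm))
  refine ⟨(a jstar).coeff 0, a, ha jstar 0, fun h => haj (by rw [hC, h, map_zero]), ha,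
    fun i _ => (hle i).trans hflm.le, ?_⟩
  rw [← hC, Finset.filter_ne', Finset.add_sum_erase _ (fun i => a i • v i) (Finset.mem_univ _)]
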